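/- Let f ∈ ℂ[x₀,x₁,x₂,x₃] be a nonzero homogeneous polynomial of degree 4 and suppose the surface X = {f = 0} has two distinct points P ≠ Q, each of multiplicity ≥ 3 on X. Then every point of the line through P and Q is a singular point of X. In particular, a quartic surface in ℙ³(ℂ) with only isolated singularities has at most one ordinary triple point, i.e. μ₃(4) = 1. -/

import Mathlib

open MvPolynomial

noncomputable section

/-- Iterated partial derivative of `f` along a list of variable indices. -/
def pderivList {n : ℕ} (l : List (Fin n)) (f : MvPolynomial (Fin n) ℂ) :
    MvPolynomial (Fin n) ℂ :=
  l.foldl (fun g i => MvPolynomial.pderiv i g) f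

/-- All partial derivatives of `f` of order `< m` vanish at `p`
(`P` has multiplicity `≥ m` on `{f = 0}`). -/
def MultAtLeast {n : ℕ} (f : MvPolynomial (Fin n) ℂ) (p : Fin n → ℂ) (m : ℕ) : Prop :=
  ∀ l : List (Fin n), l.length < m → MvPolynomial.eval p (pderivList l f) = 0

/-- `p` is (a representative of) a singular point of `{f = 0}`. -/
def SingularAt (f : MvPolynomial (Fin 4) ℂ) (p : Fin 4 → ℂ) : Prop :=
  MultAtLeast f p 2

/-- The partial derivatives of `c` have no common zero in `ℂⁿ ∖ {0}`. -/
def NowhereSingular {n : ℕ} (c : MvPolynomial (Fin n) ℂ) : Prop :=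
  ∀ p : Fin n → ℂ, p ≠ 0 → ∃ i, MvPolynomial.eval p (MvPolynomial.pderiv i c) ≠ 0

/-- Linear change of coordinates: `substMatrix B f` is the polynomial `x ↦ f (B.mulVec x)`. -/
def substMatrix {n : ℕ} (B : Matrix (Fin n) (Fin n) ℂ) (f : MvPolynomial (Fin n) ℂ) :
    MvPolynomial (Fin n) ℂ :=
  MvPolynomial.aeval (fun i => ∑ j, MvPolynomial.C (B i j) * MvPolynomial.X j) f

/-- `p` is (a representative of) an ordinary triple point of the degree-`d` surface `{f = 0}`:
all partials of order `≤ 2` vanish at `p`, some third-order partial does not, and after a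
linear change of coordinates taking `(0,0,0,1)` to `p`, writing `f` as
`∑ⱼ x₃^(d-j) fⱼ(x₀,x₁,x₂)` with `fⱼ` homogeneous of degree `j`, the cubic `f₃` is nonsingular. -/
def OrdinaryTriplePointAt (d : ℕ) (f : MvPolynomial (Fin 4) ℂ) (p : Fin 4 → ℂ) : Prop :=
  MultAtLeast f p 3 ∧
  (∃ l : List (Fin 4), l.length = 3 ∧ MvPolynomial.eval p (pderivList l f) ≠ 0) ∧
  ∃ B : Matrix (Fin 4) (Fin 4) ℂ, IsUnit B.det ∧ B.mulVec ![0, 0, 0, 1] = p ∧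
    ∃ g : ℕ → MvPolynomial (Fin 3) ℂ,
      (∀ j, (g j).IsHomogeneous j) ∧
      substMatrix B f =
        ∑ j ∈ Finset.range (d + 1),
          (MvPolynomial.X 3) ^ (d - j) * MvPolynomial.rename Fin.castSucc (g j) ∧
      NowhereSingular (g 3)

/-- The set of singular points of `{f = 0}` in `ℙ³(ℂ)`. -/
def SingSet (f : MvPolynomial (Fin 4) ℂ) : Set (Projectivization ℂ (Fin 4 → ℂ)) :=
  {P | SingularAt f P.rep}

/-- `{f = 0}` has `ν` ordinary triple points as its only singularities. -/
def OnlyTriplePoints (d ν : ℕ) (f : MvPolynomial (Fin 4) ℂ) : Prop :=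
  (SingSet f).Finite ∧ (SingSet f).ncard = ν ∧
  ∀ P ∈ SingSet f, OrdinaryTriplePointAt d f P.rep

/-!
If `f` is a form of degree `d` with multiplicity `≥ k` at `p` and at `q`, and `d < 2k`, then the
binary form `G(x₀, x₁) = f (x₀ • p + x₁ • q)` is zero: each coefficient of `G` is, up to a
factorial, a directional derivative of `f` of order `< k` at `p` or at `q`. For a quartic this
applies to `f` itself (`d = 4`, `k = 3`) and to its first partials (`d = 3`, `k = 2`), so the line
through two triple points is singular. A projective line over `ℂ` is infinite, so a quartic with
finitely many singular points has at most one triple point.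
-/

open scoped LinearAlgebra.Projectivization

lemma pderivList_cons {n : ℕ} (i : Fin n) (l : List (Fin n)) (f : MvPolynomial (Fin n) ℂ) :
    pderivList (i :: l) f = pderivList l (pderiv i f) := rfl

lemma pderivList_C_mul {n : ℕ} (l : List (Fin n)) (a : ℂ) (f : MvPolynomial (Fin n) ℂ) :
    pderivList l (C a * f) = C a * pderivList l f := by
  induction l generalizing f with
  | nil => rfl
  | cons i l ih => rw [pderivList_cons, pderiv_C_mul, ih, pderivList_cons]

lemma pderivList_sum {n : ℕ} {ι : Type*} (l : List (Fin n)) (s : Finset ι)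
    (g : ι → MvPolynomial (Fin n) ℂ) :
    pderivList l (∑ i ∈ s, g i) = ∑ i ∈ s, pderivList l (g i) := by
  induction l generalizing g with
  | nil => rfl
  | cons i l ih => rw [pderivList_cons, map_sum, ih]; rfl

def dirDeriv {n : ℕ} (b : Fin n → ℂ) (f : MvPolynomial (Fin n) ℂ) : MvPolynomial (Fin n) ℂ :=
  ∑ i, C (b i) * pderiv i f

namespace MultAtLeast

variable {n k : ℕ} {f : MvPolynomial (Fin n) ℂ} {p : Fin n → ℂ}

lemma pderiv (h : MultAtLeast f p (k + 1)) (i : Fin n) : MultAtLeast (pderiv i f) p k :=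
  fun l hl => h (i :: l) (by simpa using hl)

lemma dirDeriv (h : MultAtLeast f p (k + 1)) (b : Fin n → ℂ) :
    MultAtLeast (dirDeriv b f) p k := by
  intro l hl
  simp only [_root_.dirDeriv, pderivList_sum, pderivList_C_mul, map_sum, map_mul,
    h.pderiv _ l hl, mul_zero, Finset.sum_const_zero]

lemma iterate_dirDeriv {m : ℕ} (h : MultAtLeast f p (k + m)) (b : Fin n → ℂ) :
    MultAtLeast ((_root_.dirDeriv b)^[m] f) p k := by
  induction m generalizing f with
  | zero => exact h
  | succ m ih => exact ih (h.dirDeriv b)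

end MultAtLeast

lemma MvPolynomial.derivative_aeval {R σ : Type*} [CommSemiring R] [Fintype σ]
    (s : σ → Polynomial R) (f : MvPolynomial σ R) :
    Polynomial.derivative (aeval s f) =
      ∑ i, aeval s (pderiv i f) * Polynomial.derivative (s i) := by
  induction f using MvPolynomial.induction_on with
  | C a => simp
  | add f g hf hg => simp only [map_add, hf, hg, add_mul, Finset.sum_add_distrib]
  | mul_X f j hf =>
    classical
    simp only [map_mul, aeval_X, Polynomial.derivative_mul, hf, Derivation.leibniz, pderiv_X,
      smul_eq_mul, map_add, add_mul, Finset.sum_add_distrib, Finset.sum_mul, Pi.single_apply]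
    simp [mul_comm, mul_assoc, add_comm]

def lineRestrict {n : ℕ} (a b : Fin n → ℂ) (f : MvPolynomial (Fin n) ℂ) : Polynomial ℂ :=
  aeval (fun i => Polynomial.C (a i) + Polynomial.C (b i) * Polynomial.X) f

section lineRestrict

variable {n : ℕ} (a b : Fin n → ℂ) (f : MvPolynomial (Fin n) ℂ)

lemma eval_lineRestrict (t : ℂ) : (lineRestrict a b f).eval t = eval (a + t • b) f := by
  rw [lineRestrict, ← Polynomial.coe_aeval_eq_eval, comp_aeval_apply, ← aeval_eq_eval]
  congr 2
  funext i
  simp [mul_comm (b i)]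

lemma derivative_lineRestrict :
    Polynomial.derivative (lineRestrict a b f) = lineRestrict a b (dirDeriv b f) := by
  rw [lineRestrict, derivative_aeval, lineRestrict, dirDeriv, map_sum]
  refine Finset.sum_congr rfl fun i _ => ?_
  rw [map_mul, aeval_C, Polynomial.algebraMap_eq, mul_comm]
  simp

lemma iterate_derivative_lineRestrict (m : ℕ) :
    Polynomial.derivative^[m] (lineRestrict a b f) = lineRestrict a b ((dirDeriv b)^[m] f) := by
  induction m generalizing f with
  | zero => rfl
  | succ m ih => rw [Function.iterate_succ_apply, Function.iterate_succ_apply, ← ih,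
      derivative_lineRestrict]

variable {a b f}

/-- By Taylor's formula the `m`-th coefficient is `m!⁻¹` times the `m`-th derivative of `f` at `a`
in direction `b`. -/
lemma coeff_lineRestrict_eq_zero {k m : ℕ} (h : MultAtLeast f a k) (hm : m < k) :
    (lineRestrict a b f).coeff m = 0 := by
  have hderiv : (Polynomial.derivative^[m] (lineRestrict a b f)).eval 0 = 0 := by
    rw [iterate_derivative_lineRestrict, eval_lineRestrict, zero_smul, add_zero]
    exact MultAtLeast.iterate_dirDeriv (k := k - m) (by rwa [Nat.sub_add_cancel hm.le]) b []
      (by simpa using hm)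
  rw [← Polynomial.coeff_zero_eq_eval_zero, Polynomial.coeff_iterate_derivative, zero_add,
    Nat.descFactorial_self, nsmul_eq_mul] at hderiv
  exact (mul_eq_zero.1 hderiv).resolve_left (Nat.cast_ne_zero.2 m.factorial_ne_zero)

end lineRestrict

def binaryForm {n : ℕ} (p q : Fin n → ℂ) (f : MvPolynomial (Fin n) ℂ) :
    MvPolynomial (Fin 2) ℂ :=
  aeval (fun i => C (p i) * X 0 + C (q i) * X 1) f

section binaryForm

variable {n d : ℕ} {p q : Fin n → ℂ} {f : MvPolynomial (Fin n) ℂ}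

lemma isHomogeneous_binaryForm (hf : f.IsHomogeneous d) :
    (binaryForm p q f).IsHomogeneous d := by
  simpa only [binaryForm, one_mul] using
    hf.aeval (fun i => C (p i) * X 0 + C (q i) * X 1) fun i =>
      ((isHomogeneous_X ℂ 0).C_mul (p i)).add ((isHomogeneous_X ℂ 1).C_mul (q i))

lemma homogenize_lineRestrict (hf : f.IsHomogeneous d) :
    (lineRestrict q p f).homogenize d = binaryForm p q f := by
  refine Polynomial.homogenize_eq_of_isHomogeneous (isHomogeneous_binaryForm hf) ?_
  rw [binaryForm, comp_aeval_apply, lineRestrict]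
  congr 2
  funext i
  rw [map_add, map_mul, map_mul, aeval_C, aeval_C, aeval_X, aeval_X]
  simp only [Polynomial.algebraMap_eq, Matrix.cons_val_zero, Matrix.cons_val_one, mul_one]
  ring

lemma rename_swap_binaryForm :
    rename (Equiv.swap 0 1) (binaryForm p q f) = binaryForm q p f := by
  rw [binaryForm, comp_aeval_apply, binaryForm]
  congr 2
  funext i
  simp [add_comm]

lemma coeff_binaryForm (hf : f.IsHomogeneous d) (m : Fin 2 →₀ ℕ) :
    coeff m (binaryForm p q f) =
      if m 0 + m 1 = d then (lineRestrict q p f).coeff (m 0) else 0 := by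
  rw [← homogenize_lineRestrict hf, Polynomial.coeff_homogenize]

lemma coeff_binaryForm' (hf : f.IsHomogeneous d) (m : Fin 2 →₀ ℕ) :
    coeff m (binaryForm p q f) =
      if m 0 + m 1 = d then (lineRestrict p q f).coeff (m 1) else 0 := by
  rw [← coeff_rename_mapDomain _ (Equiv.swap (0 : Fin 2) 1).injective, rename_swap_binaryForm,
    coeff_binaryForm hf]
  have hswap (i : Fin 2) : m.mapDomain (Equiv.swap 0 1) i = m (Equiv.swap 0 1 i) := by
    rw [← Finsupp.mapDomain_apply (Equiv.swap (0 : Fin 2) 1).injective m, Equiv.swap_apply_self]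
  simp only [hswap, Equiv.swap_apply_left, Equiv.swap_apply_right, add_comm (m 1)]

/-- The coefficient of `x₀ⁱ x₁ʲ` is the `i`-th Taylor coefficient of `f` at `q` along the line and
also its `j`-th one at `p`; as `i + j = d < 2k`, one of them is killed by the multiplicity. -/
lemma binaryForm_eq_zero {k : ℕ} (hf : f.IsHomogeneous d) (hdk : d < 2 * k)
    (hp : MultAtLeast f p k) (hq : MultAtLeast f q k) : binaryForm p q f = 0 := by
  ext m
  rw [coeff_zero]
  by_cases hm : m 0 < k
  · rw [coeff_binaryForm hf]
    split_ifs
    exacts [coeff_lineRestrict_eq_zero hq hm, rfl]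
  · rw [coeff_binaryForm' hf]
    split_ifs
    exacts [coeff_lineRestrict_eq_zero hp (by omega), rfl]

lemma eval_smul_add_smul_eq_zero_of_multAtLeast {k : ℕ} (hf : f.IsHomogeneous d)
    (hdk : d < 2 * k) (hp : MultAtLeast f p k) (hq : MultAtLeast f q k) (u v : ℂ) :
    eval (u • p + v • q) f = 0 := by
  have := congrArg (aeval ![u, v]) (binaryForm_eq_zero hf hdk hp hq)
  rw [binaryForm, comp_aeval_apply, map_zero] at this
  rw [← this, ← aeval_eq_eval]
  congr 2
  funext i
  simp [mul_comm]

end binaryForm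

lemma singularAt_of_multAtLeast_three {f : MvPolynomial (Fin 4) ℂ} (hf : f.IsHomogeneous 4)
    {p q : Fin 4 → ℂ} (hp : MultAtLeast f p 3) (hq : MultAtLeast f q 3) (u v : ℂ) :
    SingularAt f (u • p + v • q) := by
  rintro (_ | ⟨i, _ | ⟨j, l⟩⟩) hl
  · exact eval_smul_add_smul_eq_zero_of_multAtLeast hf (by norm_num) hp hq u v
  · exact eval_smul_add_smul_eq_zero_of_multAtLeast hf.pderiv (k := 2) (by norm_num)
      (hp.pderiv i) (hq.pderiv i) u v
  · simp at hl

lemma Projectivization.infinite_setOf_rep_eq_smul_add_smul {K V : Type*} [Field K] [Infinite K]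
    [AddCommGroup V] [Module K V] {x y : ℙ K V} (hxy : x ≠ y) :
    {P : ℙ K V | ∃ a b : K, P.rep = a • x.rep + b • y.rep}.Infinite := by
  have hind : LinearIndependent K ![x.rep, y.rep] := by
    rwa [← independent_mk_iff_LinearIndependent x.rep_nonzero y.rep_nonzero, mk_rep, mk_rep,
      independent_pair_iff_ne]
  have hne (t : K) : x.rep + t • y.rep ≠ 0 := fun h =>
    one_ne_zero (LinearIndependent.pair_iff.1 hind 1 t (by rwa [one_smul])).1
  refine Set.infinite_of_injective_forall_mem (f := fun t => mk K _ (hne t)) ?_ fun t => ?_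
  · intro t t' h
    obtain ⟨a, ha⟩ := (mk_eq_mk_iff K _ _ (hne t) (hne t')).1 h
    obtain ⟨ha1, hat⟩ := LinearIndependent.pair_iff.1 hind (a - 1) (a * t' - t) (by
      rw [Units.smul_def] at ha
      linear_combination (norm := module) ha)
    rw [sub_eq_zero] at ha1 hat
    rwa [ha1, one_mul, eq_comm] at hat
  · obtain ⟨a, ha⟩ := exists_smul_eq_mk_rep K _ (hne t)
    exact ⟨a, a * t, by rw [← ha, Units.smul_def, smul_add, smul_smul]⟩

lemma subsingleton_setOf_multAtLeast_three {f : MvPolynomial (Fin 4) ℂ}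
    (hf : f.IsHomogeneous 4) (hfin : (SingSet f).Finite) :
    {P : ℙ ℂ (Fin 4 → ℂ) | MultAtLeast f P.rep 3}.Subsingleton := by
  intro P hP Q hQ
  by_contra hPQ
  refine Projectivization.infinite_setOf_rep_eq_smul_add_smul hPQ (hfin.subset ?_)
  rintro R ⟨a, b, hR⟩
  change SingularAt f R.rep
  rw [hR]
  exact singularAt_of_multAtLeast_three hf hP hQ a b

/-- A quartic surface with two distinct points of multiplicity `≥ 3` is
singular along the whole line joining them; in particular a quartic with only isolated
singularities has at most one ordinary triple point, i.e. `μ₃(4) = 1`. -/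
theorem quartic_triple_points :
    (∀ f : MvPolynomial (Fin 4) ℂ, f ≠ 0 → f.IsHomogeneous 4 →
      ∀ p q : Fin 4 → ℂ, p ≠ 0 → q ≠ 0 → (∀ c : ℂ, p ≠ c • q) →
      MultAtLeast f p 3 → MultAtLeast f q 3 →
      ∀ u v : ℂ, SingularAt f (u • p + v • q)) ∧
    (∀ f : MvPolynomial (Fin 4) ℂ, f ≠ 0 → f.IsHomogeneous 4 →
      (SingSet f).Finite →
      {P : Projectivization ℂ (Fin 4 → ℂ) | OrdinaryTriplePointAt 4 f P.rep}.ncard ≤ 1) := by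
  refine ⟨fun f _ hf p q _ _ _ hp hq => singularAt_of_multAtLeast_three hf hp hq,
    fun f _ hf hfin => ?_⟩
  have hsub := (subsingleton_setOf_multAtLeast_three hf hfin).anti
    fun (P : ℙ ℂ (Fin 4 → ℂ)) (hP : OrdinaryTriplePointAt 4 f P.rep) => hP.1
  exact (Set.ncard_le_one hsub.finite).2 hsub
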